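/- arXiv:2308.00899 — 3 statements merged into one kernel-verified Lean document; each statement's English description precedes it below -/
import Mathlib

section
/- Let n ≥ 1 and let f : ℝⁿ → ℝ be a coercive polynomial function. For every bounded set X₀ ⊆ ℝⁿ and every ε > 0 there exist ᾱ > 0 and Δ > 0 such that for every step size α ∈ (0, ᾱ] and every cyclic coordinate descent trajectory (x_k)_{k∈ℕ} of f with step size α and x₀ ∈ X₀, one has f(x_k) ≤ Δ for all k ∈ ℕ, and moreover there exist a critical value f* of f and k₀ ∈ ℕ such that |f(x_k) − f*| ≤ ε for all k ≥ k₀. (This is the paper's Theorem on stability of function values instantiated with a polynomial objective, which is locally Lipschitz and tame, and the random-permutations cyclic coordinate descent method, which the paper proves is approximated by subgradient trajectories when f is continuously differentiable.) -/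
/-- `f` is the evaluation of a real multivariate polynomial in `n` variables. -/
def IsPolynomialFun {n : ℕ} (f : EuclideanSpace ℝ (Fin n) → ℝ) : Prop :=
  ∃ p : MvPolynomial (Fin n) ℝ, ∀ x, f x = MvPolynomial.eval x p

/-- `f(x) → ∞` as `‖x‖ → ∞`. -/
def Coercive {n : ℕ} (f : EuclideanSpace ℝ (Fin n) → ℝ) : Prop :=
  Filter.Tendsto f (Filter.comap (fun x => ‖x‖) Filter.atTop) Filter.atTop

/-- A cyclic coordinate descent trajectory of `f` with step size `α`: for every `k` there
are a permutation `σᵏ` of the coordinates and inner iterates `z 0, …, z n` with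
`z 0 = x k`, `z i = z (i-1) - α ∇_{σᵏ i} f (z (i-1))`, and `x (k+1) = z n`, where
`∇_i f x = (∂f/∂x_i)(x) • e_i`. -/
def IsCCDTraj {n : ℕ} (f : EuclideanSpace ℝ (Fin n) → ℝ) (α : ℝ)
    (x : ℕ → EuclideanSpace ℝ (Fin n)) : Prop :=
  ∀ k : ℕ, ∃ (σ : Equiv.Perm (Fin n)) (z : Fin (n + 1) → EuclideanSpace ℝ (Fin n)),
    z 0 = x k ∧
    (∀ i : Fin n, z i.succ
      = z i.castSucc - α • EuclideanSpace.single (σ i) (gradient f (z i.castSucc) (σ i))) ∧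
    x (k + 1) = z (Fin.last n)

section AuxCCD

open Set Filter Metric InnerProductSpace

variable {n : ℕ} {f : EuclideanSpace ℝ (Fin n) → ℝ}

lemma auxCCD_contDiff (hpoly : IsPolynomialFun f) : ContDiff ℝ (⊤ : ℕ∞) f := by
  obtain ⟨p, hp⟩ := hpoly
  have h := (AnalyticOnNhd.eval_linearMap
    ((WithLp.linearEquiv 2 ℝ (Fin n → ℝ)).toLinearMap) p).contDiff (n := (⊤ : ℕ∞))
  have hfe : f = fun x => MvPolynomial.eval ((WithLp.linearEquiv 2 ℝ (Fin n → ℝ)) x) p := by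
    funext x; exact hp x
  rw [hfe]; exact h

lemma auxCCD_fderiv_apply (x v : EuclideanSpace ℝ (Fin n)) :
    fderiv ℝ f x v = ⟪gradient f x, v⟫_ℝ := by
  rw [gradient, toDual_symm_apply]

lemma auxCCD_grad_cont (hf : ContDiff ℝ (⊤ : ℕ∞) f) : Continuous (fun x => gradient f x) := by
  have h1 : Continuous (fun x => fderiv ℝ f x) := hf.continuous_fderiv (by simp)
  exact ((toDual ℝ (EuclideanSpace ℝ (Fin n))).symm.continuous).comp h1

lemma auxCCD_coord_le_norm (x : EuclideanSpace ℝ (Fin n)) (j : Fin n) : |x j| ≤ ‖x‖ := by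
  have := abs_real_inner_le_norm (EuclideanSpace.single j (1:ℝ)) x
  rw [EuclideanSpace.inner_single_left] at this
  simpa using this

lemma auxCCD_hasDerivAt_line (hf : ContDiff ℝ (⊤ : ℕ∞) f) (w v : EuclideanSpace ℝ (Fin n)) (t : ℝ) :
    HasDerivAt (fun s : ℝ => f (w - s • v)) (-⟪gradient f (w - t • v), v⟫_ℝ) t := by
  have hc : HasDerivAt (fun s : ℝ => w - s • v) (-v) t := by
    simpa using ((hasDerivAt_id t).smul_const v).const_sub w
  have hd : HasFDerivAt f (fderiv ℝ f (w - t • v)) (w - t • v) :=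
    (hf.differentiable (by simp) (w - t • v)).hasFDerivAt
  have := hd.comp_hasDerivAt t hc
  rw [auxCCD_fderiv_apply, inner_neg_right] at this
  exact this

lemma auxCCD_grad_lip (hf : ContDiff ℝ (⊤ : ℕ∞) f) (R : ℝ) :
    ∃ L : ℝ, 0 < L ∧ ∀ y ∈ closedBall (0 : EuclideanSpace ℝ (Fin n)) R,
      ∀ z ∈ closedBall (0 : EuclideanSpace ℝ (Fin n)) R,
      ‖gradient f y - gradient f z‖ ≤ L * ‖y - z‖ := by
  have hdf : ContDiff ℝ (⊤ : ℕ∞) (fun x => fderiv ℝ f x) := hf.fderiv_right (mod_cast le_top)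
  have hcont : ContinuousOn (fun x => ‖fderiv ℝ (fun x => fderiv ℝ f x) x‖)
      (closedBall (0 : EuclideanSpace ℝ (Fin n)) R) :=
    ((hdf.fderiv_right (m := (⊤ : ℕ∞)) (mod_cast le_top)).continuous.norm).continuousOn
  obtain ⟨C, hC⟩ := (isCompact_closedBall _ _).exists_bound_of_continuousOn hcont
  refine ⟨max C 0 + 1, by positivity, fun y hy z hz => ?_⟩
  have key : ‖fderiv ℝ f y - fderiv ℝ f z‖ ≤ (max C 0 + 1) * ‖y - z‖ := by
    apply (convex_closedBall _ _).norm_image_sub_le_of_norm_fderiv_le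
      (fun x _ => (hdf.differentiable (by simp) x))
      (fun x hx => ?_) hz hy
    have h1 := hC x hx
    rw [Real.norm_eq_abs] at h1
    replace h1 : ‖fderiv ℝ (fun x => fderiv ℝ f x) x‖ ≤ C := (le_abs_self _).trans h1
    have h2 : C ≤ max C 0 := le_max_left _ _
    linarith
  calc ‖gradient f y - gradient f z‖
      = ‖(toDual ℝ (EuclideanSpace ℝ (Fin n))).symm (fderiv ℝ f y - fderiv ℝ f z)‖ := by
        rw [map_sub]; rfl
    _ = ‖fderiv ℝ f y - fderiv ℝ f z‖ := LinearIsometryEquiv.norm_map _ _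
    _ ≤ (max C 0 + 1) * ‖y - z‖ := key

lemma auxCCD_coord_diff_le (x y : EuclideanSpace ℝ (Fin n)) (j : Fin n) :
    |x j - y j| ≤ ‖x - y‖ := by
  have := auxCCD_coord_le_norm (x - y) j
  simpa using this

lemma auxCCD_descent (hf : ContDiff ℝ (⊤ : ℕ∞) f) {R G L α : ℝ}
    (hG : ∀ y ∈ closedBall (0 : EuclideanSpace ℝ (Fin n)) R, ‖gradient f y‖ ≤ G)
    (hL : ∀ y ∈ closedBall (0 : EuclideanSpace ℝ (Fin n)) R,
      ∀ z ∈ closedBall (0 : EuclideanSpace ℝ (Fin n)) R,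
      ‖gradient f y - gradient f z‖ ≤ L * ‖y - z‖)
    (hα0 : 0 < α) (hαL : α * L ≤ 1) (hαG : α * G ≤ 1)
    {w : EuclideanSpace ℝ (Fin n)} (hw : ‖w‖ ≤ R - 1) (j : Fin n) :
    f (w - α • EuclideanSpace.single j (gradient f w j))
      ≤ f w - (α / 2) * (gradient f w j)^2 := by
  set g : ℝ := gradient f w j with hg
  set v : EuclideanSpace ℝ (Fin n) := EuclideanSpace.single j g with hv
  have hnv : ‖v‖ = |g| := by rw [hv, EuclideanSpace.norm_single, Real.norm_eq_abs]
  have hwR : w ∈ closedBall (0 : EuclideanSpace ℝ (Fin n)) R := by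
    simp only [mem_closedBall, dist_zero_right]; linarith
  have hgG : |g| ≤ G := (auxCCD_coord_le_norm _ j).trans (hG w hwR)
  have hytR : ∀ t ∈ Icc (0:ℝ) α, (w - t • v) ∈ closedBall (0 : EuclideanSpace ℝ (Fin n)) R := by
    intro t ht
    simp only [mem_closedBall, dist_zero_right]
    have h1 : ‖w - t • v‖ ≤ ‖w‖ + t * |g| := by
      calc ‖w - t • v‖ ≤ ‖w‖ + ‖t • v‖ := norm_sub_le _ _
        _ = ‖w‖ + |t| * |g| := by rw [norm_smul, hnv, Real.norm_eq_abs]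
        _ = ‖w‖ + t * |g| := by rw [abs_of_nonneg ht.1]
    have h2 : t * |g| ≤ α * G := by
      apply mul_le_mul ht.2 hgG (abs_nonneg _) hα0.le
    linarith
  set ψ : ℝ → ℝ := fun t => f (w - t • v) + g^2 * t - L * g^2 / 2 * t^2 with hψ
  have hderiv : ∀ t : ℝ, HasDerivAt ψ
      (-(g * gradient f (w - t • v) j) + g^2 - L * g^2 * t) t := by
    intro t
    have h1 := auxCCD_hasDerivAt_line hf w v t
    have h2 : (⟪gradient f (w - t • v), v⟫_ℝ) = g * (gradient f (w - t • v) j) := by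
      rw [hv, EuclideanSpace.inner_single_right]; simp [mul_comm]
    have h3 : HasDerivAt (fun t : ℝ => g^2 * t) (g^2) t := by
      simpa using (hasDerivAt_id t).const_mul (g^2)
    have h4 : HasDerivAt (fun t : ℝ => L * g^2 / 2 * t^2) (L * g^2 * t) t := by
      have := ((hasDerivAt_pow 2 t).const_mul (L * g^2 / 2))
      refine this.congr_deriv ?_; rw [show (2:ℕ) - 1 = 1 from rfl]; push_cast; ring
    have := (h1.add h3).sub h4
    rw [h2] at this
    exact this
  have hmono : AntitoneOn ψ (Icc 0 α) := by
    apply antitoneOn_of_deriv_nonpos (convex_Icc 0 α)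
    · exact Continuous.continuousOn (continuous_iff_continuousAt.mpr
        (fun t => (hderiv t).continuousAt))
    · intro t _
      exact (hderiv t).differentiableAt.differentiableWithinAt
    · intro t ht
      rw [interior_Icc] at ht
      rw [(hderiv t).deriv]
      have hyt := hytR t ⟨ht.1.le, ht.2.le⟩
      have hdist : ‖w - (w - t • v)‖ = t * |g| := by
        rw [sub_sub_cancel, norm_smul, hnv, Real.norm_eq_abs, abs_of_nonneg ht.1.le]
      have hcoord : |g - gradient f (w - t • v) j| ≤ L * (t * |g|) := by
        have h5 := auxCCD_coord_diff_le (gradient f w) (gradient f (w - t • v)) j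
        rw [← hg] at h5
        calc |g - gradient f (w - t • v) j|
            ≤ ‖gradient f w - gradient f (w - t • v)‖ := h5
          _ ≤ L * ‖w - (w - t • v)‖ := hL w hwR _ hyt
          _ = L * (t * |g|) := by rw [hdist]
      have key : g * (g - gradient f (w - t • v) j) ≤ L * g^2 * t := by
        calc g * (g - gradient f (w - t • v) j)
            ≤ |g * (g - gradient f (w - t • v) j)| := le_abs_self _
          _ = |g| * |g - gradient f (w - t • v) j| := abs_mul _ _
          _ ≤ |g| * (L * (t * |g|)) := by
              apply mul_le_mul_of_nonneg_left hcoord (abs_nonneg _)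
          _ = L * (|g| * |g|) * t := by ring
          _ = L * g^2 * t := by rw [abs_mul_abs_self]; ring
      nlinarith [key]
  have := hmono (left_mem_Icc.mpr hα0.le) (right_mem_Icc.mpr hα0.le) hα0.le
  simp only [hψ] at this
  have hLg : L * g^2 / 2 * α^2 ≤ g^2 * α / 2 := by
    nlinarith [mul_nonneg (sub_nonneg.mpr hαL) (mul_nonneg (sq_nonneg g) hα0.le)]
  simp only [zero_smul, sub_zero, mul_zero, pow_two, zero_mul] at this
  nlinarith [this]

lemma auxCCD_sublevel (hcoer : Coercive f) (c : ℝ) :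
    ∃ M : ℝ, 0 < M ∧ ∀ x, f x ≤ c → ‖x‖ ≤ M := by
  have hco : Filter.Tendsto f (Filter.comap (fun x => ‖x‖) Filter.atTop) Filter.atTop := hcoer
  have h := hco.eventually_ge_atTop (c + 1)
  rw [Filter.eventually_comap] at h
  obtain ⟨M₀, hM₀⟩ := h.exists_forall_of_atTop
  refine ⟨max M₀ 1, by positivity, fun x hx => ?_⟩
  by_contra hc
  push_neg at hc
  have h1 : M₀ ≤ ‖x‖ := le_trans (le_max_left _ _) hc.le
  have := hM₀ ‖x‖ h1 x rfl
  linarith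

end AuxCCD

open Set Filter Metric InnerProductSpace in
theorem stmt_0 {n : ℕ} (hn : 1 ≤ n) (f : EuclideanSpace ℝ (Fin n) → ℝ)
    (hpoly : IsPolynomialFun f) (hcoer : Coercive f)
    (X₀ : Set (EuclideanSpace ℝ (Fin n))) (hX₀ : Bornology.IsBounded X₀)
    (ε : ℝ) (hε : 0 < ε) :
    ∃ ᾱ Δ : ℝ, 0 < ᾱ ∧ 0 < Δ ∧
      ∀ α : ℝ, 0 < α → α ≤ ᾱ →
        ∀ x : ℕ → EuclideanSpace ℝ (Fin n), IsCCDTraj f α x → x 0 ∈ X₀ →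
          (∀ k : ℕ, f (x k) ≤ Δ) ∧
          ∃ fstar : ℝ, (∃ z, gradient f z = 0 ∧ f z = fstar) ∧
            ∃ k₀ : ℕ, ∀ k ≥ k₀, |f (x k) - fstar| ≤ ε := by
  classical
  have hf : ContDiff ℝ (⊤ : ℕ∞) f := auxCCD_contDiff hpoly
  obtain ⟨r, hr⟩ := hX₀.subset_closedBall 0
  obtain ⟨D₀, hD₀⟩ := (isCompact_closedBall (0 : EuclideanSpace ℝ (Fin n)) r)
    |>.exists_bound_of_continuousOn hf.continuous.continuousOn
  set Δ : ℝ := max D₀ 0 + 1 with hΔdef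
  have hΔpos : 0 < Δ := by positivity
  obtain ⟨M, hMpos, hM⟩ := auxCCD_sublevel hcoer Δ
  set R : ℝ := M + 1 with hRdef
  obtain ⟨G₀, hG₀⟩ := (isCompact_closedBall (0 : EuclideanSpace ℝ (Fin n)) R)
    |>.exists_bound_of_continuousOn ((auxCCD_grad_cont hf).norm.continuousOn)
  set G : ℝ := max G₀ 1 with hGdef
  have hGpos : 0 < G := lt_of_lt_of_le one_pos (le_max_right _ _)
  have hGbound : ∀ y ∈ closedBall (0 : EuclideanSpace ℝ (Fin n)) R, ‖gradient f y‖ ≤ G := by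
    intro y hy
    have h1 := hG₀ y hy
    rw [Real.norm_eq_abs, abs_of_nonneg (norm_nonneg _)] at h1
    exact h1.trans (le_max_left _ _)
  obtain ⟨L, hLpos, hL⟩ := auxCCD_grad_lip hf R
  refine ⟨min (1/L) (1/G), Δ, lt_min (by positivity) (by positivity), hΔpos, ?_⟩
  intro α hα0 hαᾱ x hx hx0
  choose σ z hz0 hzstep hzlast using hx
  have hαL : α * L ≤ 1 := by
    have := hαᾱ.trans (min_le_left _ _)
    rw [le_div_iff₀ hLpos] at this; linarith
  have hαG : α * G ≤ 1 := by
    have := hαᾱ.trans (min_le_right _ _)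
    rw [le_div_iff₀ hGpos] at this; linarith
  have hball : ∀ w : EuclideanSpace ℝ (Fin n), f w ≤ Δ → ‖w‖ ≤ R - 1 := by
    intro w hw
    have := hM w hw
    rw [hRdef]; linarith
  have hstep : ∀ w : EuclideanSpace ℝ (Fin n), f w ≤ Δ → ∀ j : Fin n,
      f (w - α • EuclideanSpace.single j (gradient f w j))
        ≤ f w - (α / 2) * (gradient f w j)^2 :=
    fun w hw j => auxCCD_descent hf hGbound hL hα0 hαL hαG (hball w hw) j
  have hcycle : ∀ k, f (x k) ≤ Δ → ∀ i : Fin (n+1), f (z k i) ≤ f (x k) := by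
    intro k hk i
    induction i using Fin.induction with
    | zero => rw [hz0]
    | succ i ih =>
      rw [hzstep k i]
      have h1 := hstep (z k i.castSucc) (ih.trans hk) (σ k i)
      nlinarith [sq_nonneg (gradient f (z k i.castSucc) (σ k i)), hα0.le,
        mul_nonneg (by linarith : (0:ℝ) ≤ α / 2) (sq_nonneg (gradient f (z k i.castSucc) (σ k i)))]
  have hinv : ∀ k, f (x k) ≤ Δ := by
    intro k
    induction k with
    | zero =>
      have h1 := hD₀ (x 0) (hr hx0)
      rw [Real.norm_eq_abs] at h1
      have := (le_abs_self (f (x 0))).trans h1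
      rw [hΔdef]
      have : D₀ ≤ max D₀ 0 := le_max_left _ _
      have := (le_abs_self (f (x 0))).trans h1
      linarith [le_max_left D₀ 0]
    | succ k ih =>
      rw [hzlast k]
      exact (hcycle k ih (Fin.last n)).trans ih
  have hu : ∀ k, Antitone (fun i : Fin (n+1) => f (z k i)) := by
    intro k
    rw [Fin.antitone_iff_succ_le]
    intro i
    rw [hzstep k i]
    have h1 := hstep (z k i.castSucc) ((hcycle k (hinv k) i.castSucc).trans (hinv k)) (σ k i)
    nlinarith [mul_nonneg (by linarith : (0:ℝ) ≤ α / 2)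
      (sq_nonneg (gradient f (z k i.castSucc) (σ k i)))]
  have hFmono : ∀ k, f (x (k+1)) ≤ f (x k) := by
    intro k
    rw [hzlast k]
    exact hcycle k (hinv k) (Fin.last n)
  have hqdec : ∀ k (i : Fin n),
      (α/2) * (gradient f (z k i.castSucc) (σ k i))^2 ≤ f (x k) - f (x (k+1)) := by
    intro k i
    have h1 := hstep (z k i.castSucc) ((hcycle k (hinv k) i.castSucc).trans (hinv k)) (σ k i)
    rw [← hzstep k i] at h1
    have h2 : f (x (k+1)) ≤ f (z k i.succ) := by
      rw [hzlast k]
      exact hu k (Fin.le_last i.succ)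
    have h3 : f (z k i.castSucc) ≤ f (x k) := hcycle k (hinv k) i.castSucc
    linarith
  set F : ℕ → ℝ := fun k => f (x k) with hFdef
  have hanti : Antitone F := antitone_nat_of_succ_le hFmono
  have hxkball : ∀ k, x k ∈ closedBall (0 : EuclideanSpace ℝ (Fin n)) R := by
    intro k
    simp only [mem_closedBall, dist_zero_right]
    have := hM (x k) (hinv k)
    rw [hRdef]; linarith
  obtain ⟨B, hB⟩ := (isCompact_closedBall (0 : EuclideanSpace ℝ (Fin n)) R)
    |>.exists_bound_of_continuousOn hf.continuous.continuousOn
  have hbdd : BddBelow (Set.range F) := by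
    refine ⟨-B, fun y hy => ?_⟩
    obtain ⟨k, rfl⟩ := hy
    have h1 := hB (x k) (hxkball k)
    rw [Real.norm_eq_abs, abs_le] at h1
    exact h1.1
  set fL : ℝ := ⨅ k, F k with hfLdef
  have hFt : Tendsto F atTop (nhds fL) := tendsto_atTop_ciInf hanti hbdd
  have hFge : ∀ k, fL ≤ F k := fun k => ciInf_le hbdd k
  have hdiff0 : Tendsto (fun k => F k - F (k+1)) atTop (nhds 0) := by
    have h1 : Tendsto (fun k => F (k+1)) atTop (nhds fL) :=
      hFt.comp (tendsto_add_atTop_nat 1)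
    simpa using hFt.sub h1
  have hg2 : ∀ i : Fin n,
      Tendsto (fun k => (gradient f (z k i.castSucc) (σ k i))^2) atTop (nhds 0) := by
    intro i
    have hub : Tendsto (fun k => (2/α) * (F k - F (k+1))) atTop (nhds 0) := by
      simpa using hdiff0.const_mul (2/α)
    apply tendsto_of_tendsto_of_tendsto_of_le_of_le tendsto_const_nhds hub
    · intro k; exact sq_nonneg _
    · intro k
      beta_reduce
      rw [div_mul_eq_mul_div, le_div_iff₀ hα0]
      nlinarith [hqdec k i]
  have hg0 : ∀ i : Fin n,
      Tendsto (fun k => gradient f (z k i.castSucc) (σ k i)) atTop (nhds 0) := by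
    intro i
    have habs : Tendsto (fun k => |gradient f (z k i.castSucc) (σ k i)|) atTop (nhds 0) := by
      have := (Real.continuous_sqrt.tendsto 0).comp (hg2 i)
      simpa [Function.comp_def, Real.sqrt_sq_eq_abs] using this
    have hneg := habs.neg
    rw [neg_zero] at hneg
    apply tendsto_of_tendsto_of_tendsto_of_le_of_le hneg habs
    · intro k; exact neg_abs_le _
    · intro k; exact le_abs_self _
  obtain ⟨xs, _, φ, hφ, hxconv⟩ :=
    (isCompact_closedBall (0 : EuclideanSpace ℝ (Fin n)) R).tendsto_subseq hxkball
  obtain ⟨σ₀, hσ₀⟩ := Finite.exists_infinite_fiber (fun j => σ (φ j))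
  have hfreq : ∃ᶠ j in atTop, σ (φ j) = σ₀ := by
    rw [Nat.frequently_atTop_iff_infinite]
    rw [← Set.infinite_coe_iff]
    convert hσ₀ using 2
    rfl
  obtain ⟨ψp, hψp, hψσ⟩ := Filter.extraction_of_frequently_atTop hfreq
  set κ : ℕ → ℕ := fun j => φ (ψp j) with hκdef
  have hκmono : StrictMono κ := hφ.comp hψp
  have hκx : Tendsto (fun j => x (κ j)) atTop (nhds xs) := hxconv.comp hψp.tendsto_atTop
  have hgκ : ∀ i : Fin n,
      Tendsto (fun j => gradient f (z (κ j) i.castSucc) (σ₀ i)) atTop (nhds 0) := by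
    intro i
    have h1 := (hg0 i).comp hκmono.tendsto_atTop
    apply h1.congr
    intro j
    simp only [Function.comp_apply, hκdef]
    rw [hψσ j]
  have hzlim : ∀ i : Fin (n+1), Tendsto (fun j => z (κ j) i) atTop (nhds xs) := by
    intro i
    induction i using Fin.induction with
    | zero =>
      apply hκx.congr
      intro j
      rw [hz0]
    | succ i ih =>
      have ht : Tendsto (fun j => α • EuclideanSpace.single (σ₀ i)
          (gradient f (z (κ j) i.castSucc) (σ₀ i))) atTop
          (nhds (0 : EuclideanSpace ℝ (Fin n))) := by
        rw [tendsto_zero_iff_norm_tendsto_zero]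
        have h2 : Tendsto (fun j => |α| * |gradient f (z (κ j) i.castSucc) (σ₀ i)|)
            atTop (nhds 0) := by
          have := ((hgκ i).abs).const_mul |α|
          simpa using this
        apply h2.congr
        intro j
        rw [norm_smul, EuclideanSpace.norm_single, Real.norm_eq_abs, Real.norm_eq_abs]
      have h3 := ih.sub ht
      rw [sub_zero] at h3
      apply h3.congr
      intro j
      rw [hzstep (κ j) i]
      simp only [hκdef]
      rw [hψσ j]
  have hgradxs : gradient f xs = 0 := by
    have hcomp : ∀ i : Fin n, gradient f xs (σ₀ i) = 0 := by
      intro i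
      have hcont : Continuous (fun y => gradient f y (σ₀ i)) :=
        (EuclideanSpace.proj (σ₀ i)).continuous.comp (auxCCD_grad_cont hf)
      have h1 : Tendsto (fun j => gradient f (z (κ j) i.castSucc) (σ₀ i)) atTop
          (nhds (gradient f xs (σ₀ i))) :=
        (hcont.tendsto xs).comp (hzlim i.castSucc)
      exact tendsto_nhds_unique h1 (hgκ i)
    ext j'
    have h2 : j' = σ₀ (σ₀.symm j') := (Equiv.apply_symm_apply σ₀ j').symm
    rw [h2]
    exact hcomp (σ₀.symm j')
  have hfxs : f xs = fL := by
    have h1 : Tendsto (fun j => f (x (κ j))) atTop (nhds (f xs)) :=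
      (hf.continuous.tendsto xs).comp hκx
    have h2 : Tendsto (fun j => f (x (κ j))) atTop (nhds fL) :=
      hFt.comp hκmono.tendsto_atTop
    exact tendsto_nhds_unique h1 h2
  refine ⟨hinv, fL, ⟨xs, hgradxs, hfxs⟩, ?_⟩
  have hev : ∀ᶠ k in atTop, F k < fL + ε :=
    hFt.eventually_lt_const (by linarith : fL < fL + ε)
  rw [eventually_atTop] at hev
  obtain ⟨k₀, hk₀⟩ := hev
  refine ⟨k₀, fun k hk => ?_⟩
  have h1 := hk₀ k hk
  have h2 := hFge k
  have h3 : (0:ℝ) ≤ f (x k) - fL := by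
    have : F k = f (x k) := rfl
    linarith [h2]
  rw [abs_of_nonneg h3]
  have h4 : F k = f (x k) := rfl
  linarith
end

section
/- Let n ≥ 1 and let f : ℝⁿ → ℝ be a coercive polynomial function. For every bounded set X₀ ⊆ ℝⁿ and every ε > 0 there exists ᾱ > 0 such that for every step size α ∈ (0, ᾱ] and every cyclic coordinate descent trajectory (x_k)_{k∈ℕ} of f with step size α and x₀ ∈ X₀, there exist a connected component C of the set {x ∈ ℝⁿ : ∇f(x) = 0} and k₀ ∈ ℕ such that dist(x_k, C) ≤ ε for all k ≥ k₀. (This is the paper's Corollary on stability of iterates instantiated with a polynomial objective and the random-permutations cyclic coordinate descent method.) -/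
open Filter Metric Set RealInnerProductSpace Topology

section Aux

variable {n : ℕ}

local notation "E" => EuclideanSpace ℝ (Fin n)

theorem aux_contDiff {f : E → ℝ} (hpoly : IsPolynomialFun f) : ContDiff ℝ (⊤ : ℕ∞) f := by
  obtain ⟨p, hp⟩ := hpoly
  have : f = fun x : E => MvPolynomial.eval x p := funext hp
  rw [this]; clear this hp
  induction p using MvPolynomial.induction_on with
  | C a => simp only [MvPolynomial.eval_C]; exact contDiff_const
  | add p q hp hq =>
      have : (fun x : E => MvPolynomial.eval x (p + q))
          = (fun x : E => MvPolynomial.eval x p) + fun x : E => MvPolynomial.eval x q := by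
        funext x; simp
      rw [this]; exact hp.add hq
  | mul_X p i hp =>
      have : (fun x : E => MvPolynomial.eval x (p * MvPolynomial.X i))
          = (fun x : E => MvPolynomial.eval x p)
            * fun x : E => (EuclideanSpace.proj i : E →L[ℝ] ℝ) x := by
        funext x; simp
      rw [this]; exact hp.mul (EuclideanSpace.proj i : E →L[ℝ] ℝ).contDiff

theorem aux_grad_contDiff {f : E → ℝ} (hf : ContDiff ℝ (⊤ : ℕ∞) f) : ContDiff ℝ (⊤ : ℕ∞) (gradient f) := by
  have : gradient f = fun x => (InnerProductSpace.toDual ℝ E).symm (fderiv ℝ f x) := rfl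
  rw [this]
  exact (InnerProductSpace.toDual ℝ E).symm.contDiff.comp (hf.fderiv_right (mod_cast le_top))

theorem aux_coord_le (w : E) (j : Fin n) : |w j| ≤ ‖w‖ := by
  rw [EuclideanSpace.norm_eq]
  have h1 : (w j) ^ 2 ≤ ∑ i, ‖w i‖ ^ 2 := by
    have := Finset.single_le_sum (f := fun i => ‖w i‖ ^ 2)
      (fun i _ => by positivity) (Finset.mem_univ j)
    simpa [Real.norm_eq_abs, sq_abs] using this
  calc |w j| = Real.sqrt ((w j) ^ 2) := (Real.sqrt_sq_eq_abs _).symm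
    _ ≤ _ := Real.sqrt_le_sqrt h1

theorem aux_norm_le_coord (w : E) (b : ℝ) (hb : 0 ≤ b) (h : ∀ j, |w j| ≤ b) :
    ‖w‖ ≤ Real.sqrt n * b := by
  rw [EuclideanSpace.norm_eq]
  have h1 : ∑ i, ‖w i‖ ^ 2 ≤ (n : ℝ) * b ^ 2 := by
    calc ∑ i, ‖w i‖ ^ 2 ≤ ∑ _i : Fin n, b ^ 2 := by
          refine Finset.sum_le_sum fun i _ => ?_
          have := h i
          rw [Real.norm_eq_abs]
          nlinarith [abs_nonneg (w i)]
      _ = (n : ℝ) * b ^ 2 := by simp [mul_comm]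
  calc Real.sqrt (∑ i, ‖w i‖ ^ 2) ≤ Real.sqrt ((n : ℝ) * b ^ 2) := Real.sqrt_le_sqrt h1
    _ = Real.sqrt n * b := by rw [Real.sqrt_mul (Nat.cast_nonneg n), Real.sqrt_sq hb]

theorem descent_lemma (f : E → ℝ) (hf : ContDiff ℝ (⊤ : ℕ∞) f) {B : Set E} {L : ℝ}
    (hlip : ∀ a ∈ B, ∀ b ∈ B, ‖gradient f a - gradient f b‖ ≤ L * ‖a - b‖)
    (y v : E) (hseg : ∀ t : ℝ, t ∈ Set.Icc (0:ℝ) 1 → y + t • v ∈ B) :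
    f (y + v) ≤ f y + ⟪gradient f y, v⟫ + L / 2 * ‖v‖ ^ 2 := by
  have hdiff : ∀ x : E, HasFDerivAt f (fderiv ℝ f x) x :=
    fun x => ((hf.differentiable (by simp)) x).hasFDerivAt
  have hfd : ∀ x : E, ∀ w : E, fderiv ℝ f x w = ⟪gradient f x, w⟫ := by
    intro x w
    have h := ((hf.differentiable (by simp)) x).hasGradientAt
    rw [hasGradientAt_iff_hasFDerivAt] at h
    rw [h.fderiv]; simp [InnerProductSpace.toDual_apply_apply]
  set c : ℝ → E := fun t => y + t • v with hc
  have hcderiv : ∀ t : ℝ, HasDerivAt c v t := by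
    intro t
    simpa [hc] using ((hasDerivAt_id t).smul_const v).const_add y
  have hφ : ∀ t : ℝ, HasDerivAt (fun s => f (c s)) ⟪gradient f (c t), v⟫ t := by
    intro t
    have := (hdiff (c t)).comp_hasDerivAt t (hcderiv t)
    rw [hfd] at this; exact this
  set ψ : ℝ → ℝ := fun t => f y + ⟪gradient f y, v⟫ * t + L / 2 * ‖v‖ ^ 2 * t ^ 2 - f (c t)
    with hψ
  have hψd : ∀ t : ℝ, HasDerivAt ψ
      (⟪gradient f y, v⟫ + L / 2 * ‖v‖ ^ 2 * (2 * t) - ⟪gradient f (c t), v⟫) t := by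
    intro t
    have h1 : HasDerivAt (fun t : ℝ => f y + ⟪gradient f y, v⟫ * t + L / 2 * ‖v‖ ^ 2 * t ^ 2)
        (⟪gradient f y, v⟫ + L / 2 * ‖v‖ ^ 2 * (2 * t)) t := by
      have ha : HasDerivAt (fun t : ℝ => ⟪gradient f y, v⟫ * t) ⟪gradient f y, v⟫ t := by
        simpa using (hasDerivAt_id t).const_mul ⟪gradient f y, v⟫
      have hb : HasDerivAt (fun t : ℝ => L / 2 * ‖v‖ ^ 2 * t ^ 2) (L / 2 * ‖v‖ ^ 2 * (2 * t)) t := by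
        have := (hasDerivAt_pow 2 t).const_mul (L / 2 * ‖v‖ ^ 2)
        simpa [mul_comm, mul_assoc, mul_left_comm] using this
      exact ((ha.const_add (f y)).add hb)
    exact h1.sub (hφ t)
  have hmono : MonotoneOn ψ (Set.Icc (0:ℝ) 1) := by
    apply monotoneOn_of_deriv_nonneg (convex_Icc 0 1)
    · exact fun t _ => ((hψd t).continuousAt).continuousWithinAt
    · intro t ht
      exact ((hψd t).differentiableAt).differentiableWithinAt
    · intro t ht
      rw [interior_Icc] at ht
      rw [(hψd t).deriv]
      have h2 : ⟪gradient f (c t) - gradient f y, v⟫ ≤ ‖gradient f (c t) - gradient f y‖ * ‖v‖ :=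
        real_inner_le_norm _ _
      rw [inner_sub_left] at h2
      have h3 : ‖gradient f (c t) - gradient f y‖ ≤ L * ‖c t - y‖ := by
        apply hlip _ (hseg t ⟨le_of_lt ht.1, le_of_lt ht.2⟩) _
          (by simpa using hseg 0 ⟨le_refl _, zero_le_one⟩)
      have h4 : ‖c t - y‖ = t * ‖v‖ := by
        simp [hc, norm_smul, abs_of_pos ht.1]
      have h5 := mul_le_mul_of_nonneg_right h3 (norm_nonneg v)
      rw [h4] at h5
      have h6 : L * (t * ‖v‖) * ‖v‖ = L * t * ‖v‖ ^ 2 := by ring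
      linarith [h6 ▸ h5]
  have key := hmono (Set.left_mem_Icc.2 zero_le_one) (Set.right_mem_Icc.2 zero_le_one) zero_le_one
  have h0 : ψ 0 = 0 := by simp [hψ, hc]
  have h1 : ψ 1 = f y + ⟪gradient f y, v⟫ + L / 2 * ‖v‖ ^ 2 - f (y + v) := by
    simp [hψ, hc]
  rw [h0, h1] at key
  linarith

end Aux
set_option maxHeartbeats 1000000 in
theorem stmt_1 {n : ℕ} (hn : 1 ≤ n) (f : EuclideanSpace ℝ (Fin n) → ℝ)
    (hpoly : IsPolynomialFun f) (hcoer : Coercive f)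
    (X₀ : Set (EuclideanSpace ℝ (Fin n))) (hX₀ : Bornology.IsBounded X₀)
    (ε : ℝ) (hε : 0 < ε) :
    ∃ ᾱ : ℝ, 0 < ᾱ ∧
      ∀ α : ℝ, 0 < α → α ≤ ᾱ →
        ∀ x : ℕ → EuclideanSpace ℝ (Fin n), IsCCDTraj f α x → x 0 ∈ X₀ →
          ∃ C : Set (EuclideanSpace ℝ (Fin n)),
            (∃ z, gradient f z = 0 ∧
              C = connectedComponentIn {y | gradient f y = 0} z) ∧
            ∃ k₀ : ℕ, ∀ k ≥ k₀, Metric.infDist (x k) C ≤ ε := by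
  classical
  have hC : ContDiff ℝ (⊤ : ℕ∞) f := aux_contDiff hpoly
  set g : EuclideanSpace ℝ (Fin n) → EuclideanSpace ℝ (Fin n) := gradient f with hg
  have hgC : ContDiff ℝ (⊤ : ℕ∞) g := aux_grad_contDiff hC
  have hgcont : Continuous g := hgC.continuous
  -- bound on X₀ and on f over it
  obtain ⟨r₀, hr₀⟩ := hX₀.subset_closedBall 0
  obtain ⟨M, hM⟩ := (isCompact_closedBall (0:EuclideanSpace ℝ (Fin n)) r₀).exists_bound_of_continuousOn
    hC.continuous.continuousOn
  have hfM : ∀ y ∈ X₀, f y ≤ M := fun y hy =>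
    le_trans (le_abs_self _) (by simpa [Real.norm_eq_abs] using hM y (hr₀ hy))
  -- sublevel set K
  set K : Set (EuclideanSpace ℝ (Fin n)) := f ⁻¹' Set.Iic M with hK
  have hKclosed : IsClosed K := IsClosed.preimage hC.continuous isClosed_Iic
  -- coercivity: K is bounded
  obtain ⟨R, hR⟩ : ∃ R : ℝ, ∀ y : EuclideanSpace ℝ (Fin n), M < f y ∨ ‖y‖ ≤ R := by
    have h1 : ∀ᶠ y in Filter.comap (fun y : EuclideanSpace ℝ (Fin n) => ‖y‖) Filter.atTop, M < f y :=
      hcoer.eventually (Filter.eventually_gt_atTop M)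
    rw [Filter.eventually_comap] at h1
    obtain ⟨R, hR⟩ := h1.exists_forall_of_atTop
    exact ⟨R, fun y => by
      rcases le_or_gt ‖y‖ R with h | h
      · exact Or.inr h
      · exact Or.inl (hR ‖y‖ h.le y rfl)⟩
  have hKball : K ⊆ closedBall 0 R := by
    intro y hy
    rw [mem_closedBall_zero_iff]
    rcases hR y with h | h
    · exact absurd (Set.mem_preimage.1 hy) (by simp [not_le.2 h])
    · exact h
  have hKc : IsCompact K :=
    Metric.isCompact_of_isClosed_isBounded hKclosed
      ((Metric.isBounded_closedBall).subset hKball)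
  set B : Set (EuclideanSpace ℝ (Fin n)) := closedBall (0:EuclideanSpace ℝ (Fin n)) (R + 1) with hB
  have hKB : K ⊆ B := hKball.trans (closedBall_subset_closedBall (by linarith))
  -- gradient bound G and Lipschitz constant L on B
  obtain ⟨G₀, hG₀⟩ := (isCompact_closedBall (0:EuclideanSpace ℝ (Fin n)) (R+1)).exists_bound_of_continuousOn
    hgcont.continuousOn
  set G : ℝ := max G₀ 1 with hGdef
  have hG1 : 1 ≤ G := le_max_right _ _
  have hGpos : 0 < G := lt_of_lt_of_le one_pos hG1
  have hGb : ∀ y ∈ B, ‖g y‖ ≤ G := fun y hy => le_trans (hG₀ y hy) (le_max_left _ _)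
  have hgd : ContDiff ℝ (⊤ : ℕ∞) (fderiv ℝ g) := hgC.fderiv_right (mod_cast le_top)
  obtain ⟨L₀, hL₀⟩ := (isCompact_closedBall (0:EuclideanSpace ℝ (Fin n)) (R+1)).exists_bound_of_continuousOn
    (hgd.continuous.continuousOn)
  set L : ℝ := max L₀ 1 with hLdef
  have hL1 : 1 ≤ L := le_max_right _ _
  have hLpos : 0 < L := lt_of_lt_of_le one_pos hL1
  have hlip : ∀ a ∈ B, ∀ b ∈ B, ‖g a - g b‖ ≤ L * ‖a - b‖ := by
    intro a ha b hb
    have := Convex.norm_image_sub_le_of_norm_fderiv_le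
      (f := g) (C := L) (fun y (_ : y ∈ B) => (hgC.differentiable (by simp)) y)
      (fun y hy => le_trans (hL₀ y hy) (le_max_left _ _)) (convex_closedBall _ _) hb ha
    simpa using this
  refine ⟨min (1/L) (1/G), lt_min (by positivity) (by positivity), ?_⟩
  intro α hα0 hαᾱ x hccd hx0
  have hαL : α * L ≤ 1 := by
    have h1 : α ≤ 1 / L := le_trans hαᾱ (min_le_left _ _)
    rw [le_div_iff₀ hLpos] at h1; linarith
  have hαG : α * G ≤ 1 := by
    have h1 : α ≤ 1 / G := le_trans hαᾱ (min_le_right _ _)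
    rw [le_div_iff₀ hGpos] at h1; linarith
  -- single coordinate step
  have hstep1 : ∀ y ∈ K, ∀ j : Fin n,
      (y - α • EuclideanSpace.single j (g y j)) ∈ K ∧
      f (y - α • EuclideanSpace.single j (g y j)) ≤ f y - α / 2 * (g y j) ^ 2 ∧
      dist (y - α • EuclideanSpace.single j (g y j)) y = α * |g y j| := by
    intro y hy j
    set cj : ℝ := g y j with hcj
    set v : EuclideanSpace ℝ (Fin n) := -(α • EuclideanSpace.single j cj) with hv
    have hyv : y - α • EuclideanSpace.single j cj = y + v := by rw [hv, sub_eq_add_neg]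
    have hnv : ‖v‖ = α * |cj| := by
      rw [hv, norm_neg, norm_smul, Real.norm_eq_abs, abs_of_pos hα0,
        EuclideanSpace.norm_single, Real.norm_eq_abs]
    have hcjG : |cj| ≤ G := le_trans (aux_coord_le (g y) j) (hGb y (hKB hy))
    have hnv1 : ‖v‖ ≤ 1 := by
      rw [hnv]
      calc α * |cj| ≤ α * G := by
            apply mul_le_mul_of_nonneg_left hcjG hα0.le
        _ ≤ 1 := hαG
    have hyR : ‖y‖ ≤ R := by simpa [mem_closedBall_zero_iff] using hKball hy
    have hseg : ∀ t : ℝ, t ∈ Set.Icc (0:ℝ) 1 → y + t • v ∈ B := by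
      intro t ht
      rw [hB, mem_closedBall_zero_iff]
      calc ‖y + t • v‖ ≤ ‖y‖ + ‖t • v‖ := norm_add_le _ _
        _ ≤ R + 1 := by
            apply add_le_add hyR
            rw [norm_smul, Real.norm_eq_abs, abs_of_nonneg ht.1]
            calc t * ‖v‖ ≤ 1 * 1 := by
                  apply mul_le_mul ht.2 hnv1 (norm_nonneg _) zero_le_one
              _ = 1 := one_mul 1
    have hinner : ⟪g y, v⟫ = -(α * cj ^ 2) := by
      rw [hv, inner_neg_right, real_inner_smul_right]
      have : ⟪g y, EuclideanSpace.single j cj⟫ = cj * cj := by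
        rw [EuclideanSpace.inner_single_right]
        simp [hcj]
      rw [this]; ring
    have hdesc := descent_lemma f hC hlip y v hseg
    rw [hinner, hnv] at hdesc
    have hfy' : f (y + v) ≤ f y - α / 2 * cj ^ 2 := by
      have hLα : L * (α * |cj|) ^ 2 ≤ α * cj ^ 2 := by
        have h1 : (α * |cj|) ^ 2 = α * (α * cj ^ 2) := by
          rw [mul_pow, sq_abs]; ring
        rw [h1, ← mul_assoc]
        have ht : (0:ℝ) ≤ α * cj ^ 2 := by positivity
        nlinarith [hαL, ht]
      nlinarith [sq_nonneg cj]
    refine ⟨?_, by rwa [hyv], ?_⟩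
    · rw [hyv]
      have : f y ≤ M := Set.mem_preimage.1 hy
      have h2 : 0 ≤ α / 2 * cj ^ 2 := by positivity
      exact Set.mem_preimage.2 (Set.mem_Iic.2 (by linarith))
    · rw [hyv, dist_eq_norm]
      have : y + v - y = v := by abel
      rw [this, hnv]
  -- choose the permutations and intermediate points
  choose σ z hz0 hzstep hzlast using hccd
  set c' : ℕ → ℕ → ℝ := fun k j =>
    if h : j < n then g (z k (Fin.castSucc ⟨j, h⟩)) (σ k ⟨j, h⟩) else 0 with hc'
  set D : ℕ → ℝ := fun k => ∑ j ∈ Finset.range n, (c' k j) ^ 2 with hDdef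
  have hD0 : ∀ k, 0 ≤ D k := fun k => Finset.sum_nonneg fun j _ => sq_nonneg _
  have hc'D : ∀ k j, (c' k j) ^ 2 ≤ D k := by
    intro k j
    by_cases h : j < n
    · exact Finset.single_le_sum (f := fun j => (c' k j) ^ 2)
        (fun i _ => sq_nonneg _) (Finset.mem_range.2 h)
    · simp [hc', h, hD0 k]
  -- the cycle lemma
  have hcycle : ∀ k, x k ∈ K → ∀ m : Fin (n+1),
      z k m ∈ K ∧
      f (z k m) ≤ f (x k) - α / 2 * ∑ j ∈ Finset.range (m:ℕ), (c' k j) ^ 2 ∧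
      dist (z k m) (x k) ≤ α * ∑ j ∈ Finset.range (m:ℕ), |c' k j| := by
    intro k hxk
    intro m
    induction m using Fin.induction with
    | zero => simp [hz0 k, hxk]
    | succ i ih =>
        obtain ⟨ih1, ih2, ih3⟩ := ih
        have hci : c' k (i : ℕ) = g (z k i.castSucc) (σ k i) := by
          rw [hc']; simp only [Fin.is_lt, dif_pos]
        have hs := hstep1 (z k i.castSucc) ih1 (σ k i)
        rw [← hzstep k i] at hs
        obtain ⟨hs1, hs2, hs3⟩ := hs
        have hsum1 : ∑ j ∈ Finset.range ((i.succ : Fin (n+1)) : ℕ), (c' k j) ^ 2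
            = (∑ j ∈ Finset.range ((i.castSucc : Fin (n+1)) : ℕ), (c' k j) ^ 2) + (c' k (i:ℕ)) ^ 2 := by
          simp [Fin.val_succ, Fin.coe_castSucc, Finset.sum_range_succ]
        have hsum2 : ∑ j ∈ Finset.range ((i.succ : Fin (n+1)) : ℕ), |c' k j|
            = (∑ j ∈ Finset.range ((i.castSucc : Fin (n+1)) : ℕ), |c' k j|) + |c' k (i:ℕ)| := by
          simp [Fin.val_succ, Fin.coe_castSucc, Finset.sum_range_succ]
        refine ⟨hs1, ?_, ?_⟩
        · rw [hsum1]
          rw [hci]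
          have := hs2
          linarith [ih2]
        · calc dist (z k i.succ) (x k)
              ≤ dist (z k i.succ) (z k i.castSucc) + dist (z k i.castSucc) (x k) :=
                dist_triangle _ _ _
            _ ≤ α * |c' k (i:ℕ)| + α * ∑ j ∈ Finset.range ((i.castSucc : Fin (n+1)) : ℕ), |c' k j| := by
                apply add_le_add _ ih3
                rw [hs3, hci]
            _ = α * ∑ j ∈ Finset.range ((i.succ : Fin (n+1)) : ℕ), |c' k j| := by
                rw [hsum2]; ring
  -- all iterates are in K
  have hxK : ∀ k, x k ∈ K := by
    intro k
    induction k with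
    | zero => exact Set.mem_preimage.2 (Set.mem_Iic.2 (hfM _ hx0))
    | succ k ih =>
        have := (hcycle k ih (Fin.last n)).1
        rwa [← hzlast k] at this
  have hdesc : ∀ k, f (x (k+1)) ≤ f (x k) - α / 2 * D k := by
    intro k
    have := (hcycle k (hxK k) (Fin.last n)).2.1
    rw [← hzlast k] at this
    simpa [hDdef] using this
  -- convergence of function values and vanishing of D
  have hmono : ∀ k, f (x (k+1)) ≤ f (x k) := by
    intro k
    have h1 : 0 ≤ α / 2 * D k := by positivity
    linarith [hdesc k]
  have hA : Antitone fun k => f (x k) :=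
    antitone_nat_of_succ_le fun k => hmono k
  obtain ⟨w0, hw0K, hw0'⟩ := hKc.exists_isMinOn ⟨x 0, hxK 0⟩ hC.continuous.continuousOn
  have hw0 : ∀ y ∈ K, f w0 ≤ f y := fun y hy => hw0' hy
  have hlb : ∀ k, f w0 ≤ f (x k) := fun k => hw0 _ (hxK k)
  have hflim : Filter.Tendsto (fun k => f (x k)) Filter.atTop (𝓝 (⨅ k, f (x k))) := by
    apply tendsto_atTop_ciInf hA
    exact ⟨f w0, fun y ⟨k, hk⟩ => hk ▸ hlb k⟩
  have hdiff0 : Filter.Tendsto (fun k => f (x k) - f (x (k+1))) Filter.atTop (𝓝 0) := by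
    have h2 : Filter.Tendsto (fun k => f (x (k+1))) Filter.atTop (𝓝 (⨅ k, f (x k))) :=
      hflim.comp (Filter.tendsto_add_atTop_nat 1)
    have h3 := hflim.sub h2
    rwa [sub_self] at h3
  have hDlim : Filter.Tendsto D Filter.atTop (𝓝 0) := by
    apply squeeze_zero hD0 (g := fun k => 2 / α * (f (x k) - f (x (k+1))))
    · intro k
      have h1 := hdesc k
      have h2 : α / 2 * D k ≤ f (x k) - f (x (k+1)) := by linarith
      rw [← sub_nonneg]
      have h3 : 2 / α * (f (x k) - f (x (k+1))) - D k
          = 2 / α * ((f (x k) - f (x (k+1))) - α / 2 * D k) := by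
        field_simp
      rw [h3]
      have h4 : 0 ≤ (f (x k) - f (x (k+1))) - α / 2 * D k := by linarith
      positivity
    · have h := hdiff0.const_mul (2 / α)
      rw [mul_zero] at h
      exact h
  set β : ℕ → ℝ := fun k => Real.sqrt (D k) with hβdef
  have hβ0 : ∀ k, 0 ≤ β k := fun k => Real.sqrt_nonneg _
  have hβlim : Filter.Tendsto β Filter.atTop (𝓝 0) := by
    have := hDlim.sqrt
    simpa using this
  have hc'β : ∀ k j, |c' k j| ≤ β k := by
    intro k j
    rw [hβdef, ← Real.sqrt_sq_eq_abs]
    exact Real.sqrt_le_sqrt (hc'D k j)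
  have hTn : ∀ k, ∀ m : ℕ, m ≤ n → ∑ j ∈ Finset.range m, |c' k j| ≤ n * β k := by
    intro k m hm
    calc ∑ j ∈ Finset.range m, |c' k j| ≤ ∑ j ∈ Finset.range n, |c' k j| := by
          apply Finset.sum_le_sum_of_subset_of_nonneg
            (Finset.range_subset_range.2 hm) (fun j _ _ => abs_nonneg _)
      _ ≤ ∑ _j ∈ Finset.range n, β k := Finset.sum_le_sum fun j _ => hc'β k j
      _ = n * β k := by simp [mul_comm]
  have hzdist : ∀ k, ∀ m : Fin (n+1), dist (z k m) (x k) ≤ α * (n * β k) := by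
    intro k m
    calc dist (z k m) (x k) ≤ α * ∑ j ∈ Finset.range (m:ℕ), |c' k j| :=
          (hcycle k (hxK k) m).2.2
      _ ≤ α * (n * β k) := by
          apply mul_le_mul_of_nonneg_left _ hα0.le
          exact hTn k m (Nat.lt_succ_iff.1 m.isLt)
  -- full gradient at iterates tends to zero
  have hgradb : ∀ k, ‖g (x k)‖ ≤ Real.sqrt n * ((1 + L * (α * n)) * β k) := by
    intro k
    apply aux_norm_le_coord
    · have h1 : (0:ℝ) ≤ L * (α * n) := by positivity
      have := hβ0 k
      nlinarith
    · intro j0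
      set i : Fin n := (σ k).symm j0 with hidef
      have hji : σ k i = j0 := (σ k).apply_symm_apply j0
      have hzi : z k i.castSucc ∈ K := (hcycle k (hxK k) i.castSucc).1
      have hci : c' k (i : ℕ) = g (z k i.castSucc) (σ k i) := by
        rw [hc']; simp only [Fin.is_lt, dif_pos]
      have h1 : |g (x k) j0| ≤ |g (z k i.castSucc) j0| + ‖g (x k) - g (z k i.castSucc)‖ := by
        have h2 : |g (x k) j0 - g (z k i.castSucc) j0| ≤ ‖g (x k) - g (z k i.castSucc)‖ := by
          have := aux_coord_le (g (x k) - g (z k i.castSucc)) j0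
          simpa using this
        have := abs_sub_abs_le_abs_sub (g (x k) j0) (g (z k i.castSucc) j0)
        have h3 := abs_sub (g (x k) j0) (g (z k i.castSucc) j0)
        calc |g (x k) j0| = |g (z k i.castSucc) j0 + (g (x k) j0 - g (z k i.castSucc) j0)| := by
              ring_nf
          _ ≤ |g (z k i.castSucc) j0| + |g (x k) j0 - g (z k i.castSucc) j0| := abs_add_le _ _
          _ ≤ _ := by linarith
      have h4 : |g (z k i.castSucc) j0| ≤ β k := by
        rw [← hji, ← hci]; exact hc'β k _
      have h5 : ‖g (x k) - g (z k i.castSucc)‖ ≤ L * (α * (n * β k)) := by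
        calc ‖g (x k) - g (z k i.castSucc)‖ ≤ L * ‖x k - z k i.castSucc‖ :=
              hlip _ (hKB (hxK k)) _ (hKB hzi)
          _ ≤ L * (α * (n * β k)) := by
              apply mul_le_mul_of_nonneg_left _ hLpos.le
              rw [← dist_eq_norm, dist_comm]
              exact hzdist k i.castSucc
      calc |g (x k) j0| ≤ β k + L * (α * (n * β k)) := by linarith
        _ = (1 + L * (α * n)) * β k := by ring
  have hglim : Filter.Tendsto (fun k => g (x k)) Filter.atTop (𝓝 0) := by
    rw [tendsto_zero_iff_norm_tendsto_zero]
    have h := hβlim.const_mul (Real.sqrt n * (1 + L * (α * n)))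
    rw [mul_zero] at h
    exact squeeze_zero (fun k => norm_nonneg _) hgradb (h.congr fun k => by ring)
  have hstepdist : Filter.Tendsto (fun k => dist (x (k+1)) (x k)) Filter.atTop (𝓝 0) := by
    have h : Filter.Tendsto (fun k => α * ((n:ℝ) * β k)) Filter.atTop (𝓝 0) := by
      have h2 := hβlim.const_mul (α * (n:ℝ))
      rw [mul_zero] at h2
      exact h2.congr fun k => by ring
    apply squeeze_zero (fun k => dist_nonneg) (g := fun k => α * ((n:ℝ) * β k)) _ h
    intro k
    have := hzdist k (Fin.last n)
    rwa [← hzlast k] at this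
  -- the limit set Ω
  set Ω : Set (EuclideanSpace ℝ (Fin n)) := {w | MapClusterPt w Filter.atTop x} with hΩdef
  have hmaple : Filter.map x Filter.atTop ≤ Filter.principal K :=
    Filter.le_principal_iff.2 (Filter.mem_map.2 (Filter.Eventually.of_forall hxK))
  have hΩne : Ω.Nonempty := by
    obtain ⟨w, hwK, hw⟩ := hKc.exists_clusterPt hmaple
    exact ⟨w, hw⟩
  have hΩK : Ω ⊆ K := by
    intro w hw
    have h1 : ClusterPt w (Filter.principal K) := ClusterPt.mono hw (Filter.map_mono le_rfl) |>.mono hmaple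
    have h2 : w ∈ closure K := mem_closure_iff_clusterPt.2 h1
    rwa [hKclosed.closure_eq] at h2
  have hΩclosed : IsClosed Ω := isClosed_setOf_clusterPt (f := Filter.map x Filter.atTop)
  have hΩcomp : IsCompact Ω := hKc.of_isClosed_subset hΩclosed hΩK
  have hΩcrit : ∀ w ∈ Ω, gradient f w = 0 := by
    intro w hw
    have h1 : MapClusterPt (g w) Filter.atTop (g ∘ x) := hw.continuousAt_comp hgcont.continuousAt
    have h2 : ClusterPt (g w) (𝓝 0) := by
      have h3 : Filter.map (g ∘ x) Filter.atTop ≤ 𝓝 0 := hglim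
      exact ClusterPt.mono h1 h3
    exact t2_iff_nhds.1 (inferInstance) h2
  -- iterates approach Ω
  have hinf : ∀ r : ℝ, 0 < r → ∀ᶠ k in Filter.atTop, Metric.infDist (x k) Ω < r := by
    intro r hr
    by_contra hcon
    rw [Filter.not_eventually] at hcon
    have hcon' : ∃ᶠ k in Filter.atTop, r ≤ Metric.infDist (x k) Ω := by
      apply hcon.mono
      intro k hk
      exact not_lt.1 hk
    obtain ⟨φ, hφmono, hφ⟩ := Filter.extraction_of_frequently_atTop hcon'
    obtain ⟨w, hwK, ψ, hψmono, hψ⟩ := hKc.tendsto_subseq (x := fun j => x (φ j))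
      (fun j => hxK (φ j))
    have hwΩ : w ∈ Ω := by
      apply MapClusterPt.of_comp (φ := φ ∘ ψ)
        ((hφmono.comp hψmono).tendsto_atTop)
      exact hψ.mapClusterPt
    have h1 : Filter.Tendsto (fun j => Metric.infDist (x (φ (ψ j))) Ω)
        Filter.atTop (𝓝 (Metric.infDist w Ω)) :=
      ((Metric.continuous_infDist_pt Ω).tendsto w).comp hψ
    have h2 : r ≤ Metric.infDist w Ω :=
      le_of_tendsto_of_tendsto tendsto_const_nhds h1
        (Filter.Eventually.of_forall fun j => hφ (ψ j))
    rw [Metric.infDist_zero_of_mem hwΩ] at h2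
    linarith
  -- Ω is preconnected
  have hconn : IsPreconnected Ω := by
    rw [IsPreconnected]
    intro u v hu hv huv hune hvne
    by_contra hcon
    rw [Set.not_nonempty_iff_eq_empty] at hcon
    set A : Set (EuclideanSpace ℝ (Fin n)) := Ω \ v with hA
    set Bs : Set (EuclideanSpace ℝ (Fin n)) := Ω \ u with hBs
    have hAeq : A = Ω ∩ u := by
      apply Set.eq_of_subset_of_subset
      · intro w hw
        rcases huv hw.1 with h | h
        · exact ⟨hw.1, h⟩
        · exact absurd h hw.2
      · intro w hw
        refine ⟨hw.1, fun hwv => ?_⟩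
        have : w ∈ Ω ∩ (u ∩ v) := ⟨hw.1, hw.2, hwv⟩
        rw [hcon] at this
        exact this
    have hBeq : Bs = Ω ∩ v := by
      apply Set.eq_of_subset_of_subset
      · intro w hw
        rcases huv hw.1 with h | h
        · exact absurd h hw.2
        · exact ⟨hw.1, h⟩
      · intro w hw
        refine ⟨hw.1, fun hwu => ?_⟩
        have : w ∈ Ω ∩ (u ∩ v) := ⟨hw.1, hwu, hw.2⟩
        rw [hcon] at this
        exact this
    have hAcomp : IsCompact A := hΩcomp.of_isClosed_subset
      (hΩclosed.sdiff hv) Set.diff_subset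
    have hBcomp : IsCompact Bs := hΩcomp.of_isClosed_subset
      (hΩclosed.sdiff hu) Set.diff_subset
    have hABdisj : Disjoint A Bs := by
      rw [hAeq, hBeq]
      rw [Set.disjoint_iff]
      intro w hw
      have : w ∈ Ω ∩ (u ∩ v) := ⟨hw.1.1, hw.1.2, hw.2.2⟩
      rw [hcon] at this
      exact this
    have hAne : A.Nonempty := by rw [hAeq]; exact hune
    have hBne : Bs.Nonempty := by rw [hBeq]; exact hvne
    obtain ⟨δ, hδ0, hδ⟩ := hABdisj.exists_thickenings hAcomp hBcomp.isClosed
    have hΩAB : Ω ⊆ A ∪ Bs := by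
      intro w hw
      rcases huv hw with h | h
      · left; rw [hAeq]; exact ⟨hw, h⟩
      · right; rw [hBeq]; exact ⟨hw, h⟩
    -- eventually the iterates are in the δ/2-thickening of A or of Bs
    have hev : ∀ᶠ k in Filter.atTop,
        (Metric.infDist (x k) Ω < δ/2 ∧ dist (x (k+1)) (x k) < δ/2) := by
      apply Filter.Eventually.and (hinf (δ/2) (by linarith))
      have := hstepdist.eventually (eventually_lt_nhds (show (0:ℝ) < δ/2 by linarith))
      exact this
    obtain ⟨N, hN⟩ := Filter.eventually_atTop.1 hev
    have hmem : ∀ k, N ≤ k → x k ∈ Metric.thickening (δ/2) A ∪ Metric.thickening (δ/2) Bs := by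
      intro k hk
      have h1 := (hN k hk).1
      obtain ⟨w, hwΩ, hwd⟩ := (Metric.infDist_lt_iff hΩne).1 h1
      rcases hΩAB hwΩ with h | h
      · left; exact Metric.mem_thickening_iff.2 ⟨w, h, hwd⟩
      · right; exact Metric.mem_thickening_iff.2 ⟨w, h, hwd⟩
    have hdisj2 : Disjoint (Metric.thickening (δ/2) A) (Metric.thickening (δ/2) Bs) :=
      hδ.mono (Metric.thickening_mono (by linarith) A) (Metric.thickening_mono (by linarith) Bs)
    -- if at some step ≥ N we are in thickening of A, we stay there
    have hstay : ∀ k, N ≤ k → x k ∈ Metric.thickening (δ/2) A →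
        x (k+1) ∈ Metric.thickening (δ/2) A := by
      intro k hk hxA
      rcases hmem (k+1) (le_trans hk (Nat.le_succ k)) with h | h
      · exact h
      · exfalso
        obtain ⟨a, haA, had⟩ := Metric.mem_thickening_iff.1 hxA
        have hstep := (hN k hk).2
        have h2 : dist (x (k+1)) a < δ := by
          calc dist (x (k+1)) a ≤ dist (x (k+1)) (x k) + dist (x k) a := dist_triangle _ _ _
            _ < δ/2 + δ/2 := add_lt_add hstep had
            _ = δ := by ring
        have h3 : x (k+1) ∈ Metric.thickening δ A := Metric.mem_thickening_iff.2 ⟨a, haA, h2⟩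
        have h4 : x (k+1) ∈ Metric.thickening δ Bs :=
          Metric.thickening_mono (by linarith) Bs h
        exact Set.disjoint_iff.1 hδ ⟨h3, h4⟩ |>.elim
    -- frequently in thickening of A, frequently in thickening of Bs
    obtain ⟨a0, ha0⟩ := hAne
    obtain ⟨b0, hb0⟩ := hBne
    have ha0Ω : a0 ∈ Ω := (hAeq ▸ ha0).1
    have hb0Ω : b0 ∈ Ω := (hBeq ▸ hb0).1
    have hfreqA : ∃ᶠ k in Filter.atTop, x k ∈ Metric.thickening (δ/2) A := by
      have h1 := mapClusterPt_iff_frequently.1 ha0Ω (Metric.ball a0 (δ/2))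
        (Metric.ball_mem_nhds _ (by linarith))
      apply h1.mono
      intro k hk
      exact Metric.mem_thickening_iff.2 ⟨a0, ha0, by rwa [Metric.mem_ball] at hk⟩
    have hfreqB : ∃ᶠ k in Filter.atTop, x k ∈ Metric.thickening (δ/2) Bs := by
      have h1 := mapClusterPt_iff_frequently.1 hb0Ω (Metric.ball b0 (δ/2))
        (Metric.ball_mem_nhds _ (by linarith))
      apply h1.mono
      intro k hk
      exact Metric.mem_thickening_iff.2 ⟨b0, hb0, by rwa [Metric.mem_ball] at hk⟩
    obtain ⟨k₁, hk₁A, hk₁N⟩ := (hfreqA.and_eventually (Filter.eventually_ge_atTop N)).exists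
    have hall : ∀ k, k₁ ≤ k → x k ∈ Metric.thickening (δ/2) A := by
      intro k hk
      induction k with
      | zero =>
          have h0 : k₁ = 0 := Nat.le_zero.1 hk
          rw [h0] at hk₁A
          exact hk₁A
      | succ k ih =>
          rcases Nat.lt_or_ge k₁ (k+1) with h | h
          · have hk' : k₁ ≤ k := Nat.lt_succ_iff.1 h
            exact hstay k (le_trans hk₁N hk') (ih hk')
          · have h0 : k₁ = k + 1 := le_antisymm hk h
            rw [h0] at hk₁A
            exact hk₁A
    obtain ⟨k₂, hk₂B, hk₂⟩ := (hfreqB.and_eventually (Filter.eventually_ge_atTop k₁)).exists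
    exact Set.disjoint_iff.1 hdisj2 ⟨hall k₂ hk₂, hk₂B⟩ |>.elim
  -- conclusion
  have hΩne2 := hΩne
  obtain ⟨z0, hz0Ω⟩ := hΩne2
  refine ⟨connectedComponentIn {y | gradient f y = 0} z0,
    ⟨z0, hΩcrit z0 hz0Ω, rfl⟩, ?_⟩
  have hΩC : Ω ⊆ connectedComponentIn {y | gradient f y = 0} z0 :=
    hconn.subset_connectedComponentIn hz0Ω (fun w hw => hΩcrit w hw)
  obtain ⟨k₀, hk₀⟩ := Filter.eventually_atTop.1 (hinf ε hε)
  refine ⟨k₀, fun k hk => ?_⟩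
  calc Metric.infDist (x k) (connectedComponentIn {y | gradient f y = 0} z0)
      ≤ Metric.infDist (x k) Ω := Metric.infDist_le_infDist_of_subset hΩC hΩne
    _ ≤ ε := (hk₀ k hk).le
end

section
/- Let f : ℝⁿ → ℝ be continuously differentiable, let X ⊆ ℝⁿ, and let L > 0 satisfy |f(u) − f(v)| ≤ L‖u − v‖ for all u, v ∈ X. Let T, ε', α, c > 0, let k̄ ∈ ℕ, let (x_k)_{k∈ℕ} be a sequence in ℝⁿ, and let x : [0, T] → ℝⁿ be differentiable with x'(t) = −c ∇f(x(t)) for all t ∈ [0, T]. Assume that x(t) ∈ X for all t ∈ [0, T], and that for every k ∈ {k̄, …, k̄ + ⌊T/α⌋} one has x_k ∈ X and ‖x_k − x(α(k − k̄))‖ ≤ ε'. Then for every k ∈ {k̄, …, k̄ + ⌊T/α⌋}: f(x_k) ≤ f(x((k − k̄)α)) + ε'L and f(x((k − k̄)α)) + ε'L ≤ f(x_{k̄}) − c ∫₀^{(k − k̄)α} ‖∇f(x(s))‖² ds + 2ε'L. (This is the paper's Lemma 3.2 in the continuously differentiable case, where the Clarke subdifferential is the gradient and d(0, ∂f(x))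 = ‖∇f(x)‖.) -/
/-!
Along a gradient flow `x' = -c ∇f(x)` the chain rule gives `(f ∘ x)' = -c ‖∇f(x)‖²`, so by the
fundamental theorem of calculus `f(x(t)) = f(x(0)) - c ∫₀ᵗ ‖∇f(x(s))‖² ds`. The iterates `x_k` stay
within `ε'` of the flow at the grid points `t = (k - k̄)α ∈ [0, T]`, so the Lipschitz bound on `X`
moves each value of `f` by at most `ε'L`, once at `x_k` and once at `x_{k̄}`.
-/

open Set InnerProductSpace

theorem HasGradientAt.comp_hasDerivAt {E : Type*} [NormedAddCommGroup E] [InnerProductSpace ℝ E]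
    [CompleteSpace E] {f : E → ℝ} {g : E} {x : ℝ → E} {x' : E} {t : ℝ}
    (hf : HasGradientAt f g (x t)) (hx : HasDerivAt x x' t) :
    HasDerivAt (fun s => f (x s)) (inner ℝ g x') t := by
  have := hf.hasFDerivAt.comp_hasDerivAt t hx
  rwa [toDual_apply_apply] at this

theorem ContDiff.continuous_gradient {E : Type*} [NormedAddCommGroup E] [InnerProductSpace ℝ E]
    [CompleteSpace E] {f : E → ℝ} (hf : ContDiff ℝ 1 f) : Continuous (gradient f) :=
  (toDual ℝ E).symm.continuous.comp (hf.continuous_fderiv one_ne_zero)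

theorem ContDiff.comp_gradient_flow_eq {E : Type*} [NormedAddCommGroup E]
    [InnerProductSpace ℝ E] [CompleteSpace E] {f : E → ℝ} (hf : ContDiff ℝ 1 f)
    {x : ℝ → E} {c a b : ℝ} (hx : ∀ t ∈ uIcc a b, HasDerivAt x (-(c • gradient f (x t))) t) :
    f (x b) = f (x a) - c * ∫ s in a..b, ‖gradient f (x s)‖ ^ 2 := by
  have hderiv : ∀ t ∈ uIcc a b,
      HasDerivAt (fun s => f (x s)) (-(c * ‖gradient f (x t)‖ ^ 2)) t := by
    intro t ht
    have := ((hf.differentiable one_ne_zero (x t)).hasGradientAt).comp_hasDerivAt (hx t ht)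
    rwa [inner_neg_right, real_inner_smul_right, real_inner_self_eq_norm_sq] at this
  have hcont : ContinuousOn (fun s => -(c * ‖gradient f (x s)‖ ^ 2)) (uIcc a b) :=
    (((hf.continuous_gradient.comp_continuousOn
      fun t ht => (hx t ht).continuousAt.continuousWithinAt).norm.pow 2).const_smul c).neg
  have hftc := intervalIntegral.integral_eq_sub_of_hasDerivAt hderiv hcont.intervalIntegrable
  rw [intervalIntegral.integral_neg, intervalIntegral.integral_const_mul] at hftc
  linarith

theorem natCast_mul_mem_Icc_of_le_floor_div {m : ℕ} {α T : ℝ} (hT : 0 ≤ T)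
    (hm : m ≤ ⌊T / α⌋₊) : (m : ℝ) * α ∈ Icc 0 T := by
  rcases le_or_gt α 0 with hα | hα
  · have : m = 0 := by
      rw [Nat.floor_eq_zero.mpr ((div_nonpos_of_nonneg_of_nonpos hT hα).trans_lt one_pos)] at hm
      omega
    simp [this, hT]
  · have hmT : (m : ℝ) ≤ T / α := (Nat.cast_le.mpr hm).trans (Nat.floor_le (by positivity))
    exact ⟨by positivity, (le_div_iff₀ hα).mp hmT⟩

theorem stmt_7_general {n : ℕ} (f : EuclideanSpace ℝ (Fin n) → ℝ) (hf : ContDiff ℝ 1 f)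
    (X : Set (EuclideanSpace ℝ (Fin n))) (L : ℝ) (hL : 0 < L)
    (hLip : ∀ u ∈ X, ∀ v ∈ X, |f u - f v| ≤ L * ‖u - v‖)
    (T ε' α c : ℝ) (hT : 0 < T)
    (kbar : ℕ) (xs : ℕ → EuclideanSpace ℝ (Fin n)) (x : ℝ → EuclideanSpace ℝ (Fin n))
    (hx : ∀ t ∈ Set.Icc (0 : ℝ) T, HasDerivAt x (-(c • gradient f (x t))) t)
    (hxX : ∀ t ∈ Set.Icc (0 : ℝ) T, x t ∈ X)
    (hk : ∀ k : ℕ, kbar ≤ k → k ≤ kbar + ⌊T / α⌋₊ →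
      xs k ∈ X ∧ ‖xs k - x (α * ((k - kbar : ℕ) : ℝ))‖ ≤ ε') :
    ∀ k : ℕ, kbar ≤ k → k ≤ kbar + ⌊T / α⌋₊ →
      f (xs k) ≤ f (x (((k - kbar : ℕ) : ℝ) * α)) + ε' * L ∧
      f (x (((k - kbar : ℕ) : ℝ) * α)) + ε' * L ≤
        f (xs kbar) - c * (∫ s in (0 : ℝ)..(((k - kbar : ℕ) : ℝ) * α), ‖gradient f (x s)‖ ^ 2)
          + 2 * ε' * L := by
  have hgrid : ∀ k, kbar ≤ k → k ≤ kbar + ⌊T / α⌋₊ → ((k - kbar : ℕ) : ℝ) * α ∈ Icc 0 T :=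
    fun k _ hk2 => natCast_mul_mem_Icc_of_le_floor_div hT.le (by omega)
  have hclose : ∀ k, kbar ≤ k → k ≤ kbar + ⌊T / α⌋₊ →
      |f (xs k) - f (x (((k - kbar : ℕ) : ℝ) * α))| ≤ ε' * L := by
    intro k hk1 hk2
    obtain ⟨hxsX, hdist⟩ := hk k hk1 hk2
    rw [mul_comm α] at hdist
    calc _ ≤ L * ‖xs k - x (((k - kbar : ℕ) : ℝ) * α)‖ :=
          hLip _ hxsX _ (hxX _ (hgrid k hk1 hk2))
      _ ≤ ε' * L := by rw [mul_comm ε']; exact mul_le_mul_of_nonneg_left hdist hL.le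
  intro k hk1 hk2
  have hstart := hclose kbar le_rfl (Nat.le_add_right _ _)
  rw [Nat.sub_self, Nat.cast_zero, zero_mul] at hstart
  obtain ⟨htk0, htkT⟩ := hgrid k hk1 hk2
  have henergy := hf.comp_gradient_flow_eq (a := 0) fun t ht =>
    hx t (Icc_subset_Icc le_rfl htkT (uIcc_of_le htk0 ▸ ht))
  have hk' := abs_le.mp (hclose k hk1 hk2)
  have hstart' := abs_le.mp hstart
  constructor <;> linarith [hk'.2, hstart'.1]

theorem stmt_7 {n : ℕ} (f : EuclideanSpace ℝ (Fin n) → ℝ) (hf : ContDiff ℝ 1 f)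
    (X : Set (EuclideanSpace ℝ (Fin n))) (L : ℝ) (hL : 0 < L)
    (hLip : ∀ u ∈ X, ∀ v ∈ X, |f u - f v| ≤ L * ‖u - v‖)
    (T ε' α c : ℝ) (hT : 0 < T) (hε' : 0 < ε') (hα : 0 < α) (hc : 0 < c)
    (kbar : ℕ) (xs : ℕ → EuclideanSpace ℝ (Fin n)) (x : ℝ → EuclideanSpace ℝ (Fin n))
    (hx : ∀ t ∈ Set.Icc (0 : ℝ) T, HasDerivAt x (-(c • gradient f (x t))) t)
    (hxX : ∀ t ∈ Set.Icc (0 : ℝ) T, x t ∈ X)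
    (hk : ∀ k : ℕ, kbar ≤ k → k ≤ kbar + ⌊T / α⌋₊ →
      xs k ∈ X ∧ ‖xs k - x (α * ((k - kbar : ℕ) : ℝ))‖ ≤ ε') :
    ∀ k : ℕ, kbar ≤ k → k ≤ kbar + ⌊T / α⌋₊ →
      f (xs k) ≤ f (x (((k - kbar : ℕ) : ℝ) * α)) + ε' * L ∧
      f (x (((k - kbar : ℕ) : ℝ) * α)) + ε' * L ≤
        f (xs kbar) - c * (∫ s in (0 : ℝ)..(((k - kbar : ℕ) : ℝ) * α), ‖gradient f (x s)‖ ^ 2)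
          + 2 * ε' * L :=
  stmt_7_general f hf X L hL hLip T ε' α c hT kbar xs x hx hxX hk
end
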